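/- arXiv:0805.0294 — 3 statements merged into one kernel-verified Lean document; each statement's English description precedes it below -/
import Mathlib

section
/- Under the hypotheses of the singular Gronwall lemma (g(t) ≤ M + L ∫_{t₀}^t (t-s)^{θ-1} g(s) ds with M, L, θ > 0), iterating n times yields constants c₁(n,θ), c₂(n,θ) > 0 such that g(t) ≤ c₁(n,θ) M (1 + L^{2ⁿ-1}(t-t₀)^{2ⁿ-1}) + c₂(n,θ) L^{2ⁿ} ∫_{t₀}^t (t-s)^{2ⁿθ - 1} g(s) ds for all t ≥ t₀. -/
/-!
Substituting the hypothesis into itself and swapping the order of integration turns the kernel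
`(t - s) ^ (θ - 1)` into its self-convolution, which is at most `betaBound θ * (t - s) ^ (2θ - 1)`.
This is only used near `t`: where `t - s ≥ L ^ (-1/θ)` one has directly
`(t - s) ^ (θ - 1) ≤ L * (t - s) ^ (2θ - 1)`. Splitting the integral at `t - L ^ (-1/θ)` gives
`g ≤ (1 + θ⁻¹) M + (1 + betaBound θ) L² ∫ (t - s) ^ (2θ - 1) g` with constants independent of
`t - t₀`, and `n` iterations give the exponent `2ⁿθ`.

The estimates are made for lower Lebesgue integrals, so no integrability is needed. Where the
singular integral is infinite, the interval integral in the hypothesis takes the junk value `0`,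
and then `g t ≤ M` directly.
-/

open MeasureTheory intervalIntegral Set Real Function
open scoped ENNReal

lemma lintegral_Ioc_ofReal_eq_integral {f : ℝ → ℝ} {a b : ℝ} (hab : a ≤ b)
    (hf : IntervalIntegrable f volume a b) (hf₀ : ∀ x ∈ Ioc a b, 0 ≤ f x) :
    ∫⁻ x in Ioc a b, ENNReal.ofReal (f x) = ENNReal.ofReal (∫ x in a..b, f x) := by
  rw [integral_of_le hab, ofReal_integral_eq_lintegral_ofReal
    ((intervalIntegrable_iff_integrableOn_Ioc_of_le hab).1 hf)
    ((ae_restrict_iff' measurableSet_Ioc).2 (Filter.Eventually.of_forall hf₀))]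

lemma lintegral_Ioc_rpow_sub_left {p a b : ℝ} (hp : 0 < p) (hab : a ≤ b) :
    ∫⁻ s in Ioc a b, ENNReal.ofReal ((b - s) ^ (p - 1)) = ENNReal.ofReal ((b - a) ^ p / p) := by
  have hp' : -1 < p - 1 := by linarith
  rw [lintegral_Ioc_ofReal_eq_integral hab, integral_comp_sub_left (· ^ (p - 1)),
    integral_rpow (Or.inl hp')]
  · simp [zero_rpow hp.ne']
  · simpa using ((intervalIntegrable_rpow' hp' (a := 0) (b := b - a)).comp_sub_left b).symm
  · exact fun s hs => rpow_nonneg (by linarith [hs.2]) _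

lemma lintegral_Ioc_rpow_sub_right {p a b : ℝ} (hp : 0 < p) (hab : a ≤ b) :
    ∫⁻ s in Ioc a b, ENNReal.ofReal ((s - a) ^ (p - 1)) = ENNReal.ofReal ((b - a) ^ p / p) := by
  have hp' : -1 < p - 1 := by linarith
  rw [lintegral_Ioc_ofReal_eq_integral hab, integral_comp_sub_right (· ^ (p - 1)),
    integral_rpow (Or.inl hp')]
  · simp [zero_rpow hp.ne']
  · simpa using (intervalIntegrable_rpow' hp' (a := 0) (b := b - a)).comp_sub_right a
  · exact fun s hs => rpow_nonneg (by linarith [hs.1]) _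

lemma rpow_le_max_mul_rpow_of_half_le {u v : ℝ} (p : ℝ) (hv : 0 < v) (hvu : v / 2 ≤ u)
    (huv : u ≤ v) : u ^ p ≤ max 1 (2 ^ (-p)) * v ^ p := by
  rcases le_or_gt 0 p with hp | hp
  · calc u ^ p ≤ v ^ p := rpow_le_rpow (by linarith) huv hp
      _ ≤ _ := le_mul_of_one_le_left (rpow_nonneg hv.le _) (le_max_left _ _)
  · calc u ^ p ≤ (v / 2) ^ p := rpow_le_rpow_of_nonpos (by positivity) hvu hp.le
      _ = 2 ^ (-p) * v ^ p := by
        rw [div_rpow hv.le zero_le_two, rpow_neg zero_le_two, div_eq_inv_mul]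
      _ ≤ _ := mul_le_mul_of_nonneg_right (le_max_right _ _) (rpow_nonneg hv.le _)

lemma rpow_mul_rpow_le {u w : ℝ} (p : ℝ) (hu : 0 ≤ u) (hw : 0 ≤ w) (huw : 0 < u + w) :
    u ^ p * w ^ p ≤ max 1 (2 ^ (-p)) * (u + w) ^ p * (u ^ p + w ^ p) := by
  wlog hwu : w ≤ u generalizing u w
  · rw [add_comm u w, add_comm (u ^ p)]
    simpa only [mul_comm (u ^ p)] using this hw hu (by linarith) (by linarith)
  calc u ^ p * w ^ p ≤ max 1 (2 ^ (-p)) * (u + w) ^ p * w ^ p :=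
        mul_le_mul_of_nonneg_right
          (rpow_le_max_mul_rpow_of_half_le p huw (by linarith) (by linarith)) (rpow_nonneg hw _)
    _ ≤ _ := by
        gcongr
        exact le_add_of_nonneg_left (rpow_nonneg hu _)

/-- An upper bound for `B(θ, θ)`, the constant of the self-convolution of `s ^ (θ - 1)`. -/
noncomputable def betaBound (θ : ℝ) : ℝ := 2 * max 1 (2 ^ (1 - θ)) / θ

lemma betaBound_pos {θ : ℝ} (hθ : 0 < θ) : 0 < betaBound θ := by
  unfold betaBound; positivity

lemma lintegral_Icc_rpow_mul_rpow_le {θ r t : ℝ} (hθ : 0 < θ) (hrt : r ≤ t) :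
    ∫⁻ s in Icc r t, ENNReal.ofReal ((t - s) ^ (θ - 1)) * ENNReal.ofReal ((s - r) ^ (θ - 1))
      ≤ ENNReal.ofReal (betaBound θ * (t - r) ^ (2 * θ - 1)) := by
  rcases hrt.eq_or_lt with rfl | hrt
  · simp
  set C := ENNReal.ofReal (max 1 (2 ^ (1 - θ)) * (t - r) ^ (θ - 1))
  have hpt : ∀ s ∈ Ioc r t,
      ENNReal.ofReal ((t - s) ^ (θ - 1)) * ENNReal.ofReal ((s - r) ^ (θ - 1))
        ≤ C * (ENNReal.ofReal ((t - s) ^ (θ - 1)) + ENNReal.ofReal ((s - r) ^ (θ - 1))) := by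
    intro s hs
    have h := rpow_mul_rpow_le (θ - 1) (sub_nonneg.2 hs.2) (sub_nonneg.2 hs.1.le)
      (by linarith : 0 < t - s + (s - r))
    rw [sub_add_sub_cancel, neg_sub] at h
    rw [← ENNReal.ofReal_mul (rpow_nonneg (sub_nonneg.2 hs.2) _),
      ← ENNReal.ofReal_add (rpow_nonneg (sub_nonneg.2 hs.2) _)
        (rpow_nonneg (sub_nonneg.2 hs.1.le) _),
      ← ENNReal.ofReal_mul (by positivity)]
    exact ENNReal.ofReal_le_ofReal h
  calc _ = ∫⁻ s in Ioc r t,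
        ENNReal.ofReal ((t - s) ^ (θ - 1)) * ENNReal.ofReal ((s - r) ^ (θ - 1)) :=
        (setLIntegral_congr Ioc_ae_eq_Icc).symm
    _ ≤ ∫⁻ s in Ioc r t,
        C * (ENNReal.ofReal ((t - s) ^ (θ - 1)) + ENNReal.ofReal ((s - r) ^ (θ - 1))) :=
        setLIntegral_mono' measurableSet_Ioc hpt
    _ = C * (ENNReal.ofReal ((t - r) ^ θ / θ) + ENNReal.ofReal ((t - r) ^ θ / θ)) := by
        rw [lintegral_const_mul' _ _ ENNReal.ofReal_ne_top, lintegral_add_left (by fun_prop),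
          lintegral_Ioc_rpow_sub_left hθ hrt.le, lintegral_Ioc_rpow_sub_right hθ hrt.le]
    _ = _ := by
        have hsplit : (t - r) ^ (2 * θ - 1) = (t - r) ^ (θ - 1) * (t - r) ^ θ := by
          rw [← rpow_add (by linarith)]; ring_nf
        rw [← ENNReal.ofReal_add (by positivity) (by positivity),
          ← ENNReal.ofReal_mul (by positivity),
          betaBound, hsplit]
        ring_nf

lemma lintegral_Ioc_lintegral_Ioc_swap {a b : ℝ} {f : ℝ → ℝ → ℝ≥0∞}
    (hf : Measurable (uncurry f)) :
    ∫⁻ s in Ioc a b, ∫⁻ r in Ioc a s, f s r = ∫⁻ r in Ioc a b, ∫⁻ s in Icc r b, f s r := by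
  set T : Set (ℝ × ℝ) := {p | a < p.2 ∧ p.2 ≤ p.1 ∧ p.1 ≤ b}
  have hT : MeasurableSet T :=
    (measurableSet_lt measurable_const measurable_snd).inter
      ((measurableSet_le measurable_snd measurable_fst).inter
        (measurableSet_le measurable_fst measurable_const))
  have hrow : ∀ s, ∫⁻ r, T.indicator (uncurry f) (s, r)
      = (Ioc a b).indicator (fun s => ∫⁻ r in Ioc a s, f s r) s := by
    intro s
    by_cases hs : s ∈ Ioc a b
    · rw [indicator_of_mem hs, ← lintegral_indicator measurableSet_Ioc]
      congr 1 with r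
      simp only [indicator_apply, T, mem_Ioc, uncurry_apply_pair]
      congr 1
      exact propext ⟨fun h => ⟨h.1, h.2.1⟩, fun h => ⟨h.1, h.2, hs.2⟩⟩
    · rw [indicator_of_notMem hs]
      have h0 : ∀ r, T.indicator (uncurry f) (s, r) = 0 := fun r =>
        indicator_of_notMem (fun h => hs ⟨h.1.trans_le h.2.1, h.2.2⟩) _
      simp only [h0, lintegral_zero]
  have hcol : ∀ r, ∫⁻ s, T.indicator (uncurry f) (s, r)
      = (Ioc a b).indicator (fun r => ∫⁻ s in Icc r b, f s r) r := by
    intro r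
    by_cases hr : r ∈ Ioc a b
    · rw [indicator_of_mem hr, ← lintegral_indicator measurableSet_Icc]
      congr 1 with s
      simp only [indicator_apply, T, mem_Icc, uncurry_apply_pair]
      congr 1
      exact propext ⟨fun h => h.2, fun h => ⟨hr.1, h⟩⟩
    · rw [indicator_of_notMem hr]
      have h0 : ∀ s, T.indicator (uncurry f) (s, r) = 0 := fun s =>
        indicator_of_notMem (fun h => hr ⟨h.1, h.2.1.trans h.2.2⟩) _
      simp only [h0, lintegral_zero]
  rw [← lintegral_indicator measurableSet_Ioc, ← lintegral_indicator measurableSet_Ioc]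
  simp only [← hrow, ← hcol]
  exact lintegral_lintegral_swap ((hf.indicator hT).comp measurable_id).aemeasurable

/-- The Riemann–Liouville integral of order `p` based at `t₀`, without its factor `1 / Γ(p)`. -/
noncomputable def rlLIntegral (p t₀ : ℝ) (g : ℝ → ℝ≥0∞) (t : ℝ) : ℝ≥0∞ :=
  ∫⁻ s in Ioc t₀ t, ENNReal.ofReal ((t - s) ^ (p - 1)) * g s

lemma rlLIntegral_rlLIntegral_le {θ t₀ t : ℝ} {g : ℝ → ℝ≥0∞} (hθ : 0 < θ) (hg : Measurable g) :
    rlLIntegral θ t₀ (rlLIntegral θ t₀ g) t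
      ≤ ENNReal.ofReal (betaBound θ) * rlLIntegral (2 * θ) t₀ g t := by
  unfold rlLIntegral
  calc ∫⁻ s in Ioc t₀ t, ENNReal.ofReal ((t - s) ^ (θ - 1)) *
        ∫⁻ r in Ioc t₀ s, ENNReal.ofReal ((s - r) ^ (θ - 1)) * g r
      = ∫⁻ s in Ioc t₀ t, ∫⁻ r in Ioc t₀ s,
          ENNReal.ofReal ((t - s) ^ (θ - 1)) * (ENNReal.ofReal ((s - r) ^ (θ - 1)) * g r) := by
        simp_rw [lintegral_const_mul' _ _ ENNReal.ofReal_ne_top]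
    _ = ∫⁻ r in Ioc t₀ t, ∫⁻ s in Icc r t,
          ENNReal.ofReal ((t - s) ^ (θ - 1)) * (ENNReal.ofReal ((s - r) ^ (θ - 1)) * g r) :=
        lintegral_Ioc_lintegral_Ioc_swap (by fun_prop)
    _ = ∫⁻ r in Ioc t₀ t, (∫⁻ s in Icc r t,
          ENNReal.ofReal ((t - s) ^ (θ - 1)) * ENNReal.ofReal ((s - r) ^ (θ - 1))) * g r := by
        simp_rw [← mul_assoc]
        exact lintegral_congr fun r => lintegral_mul_const _ (by fun_prop)
    _ ≤ ∫⁻ r in Ioc t₀ t, ENNReal.ofReal (betaBound θ * (t - r) ^ (2 * θ - 1)) * g r :=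
        setLIntegral_mono' measurableSet_Ioc fun r hr => by
          gcongr
          exact lintegral_Icc_rpow_mul_rpow_le hθ hr.2
    _ = _ := by
        simp_rw [ENNReal.ofReal_mul (betaBound_pos hθ).le, mul_assoc]
        exact lintegral_const_mul' _ _ ENNReal.ofReal_ne_top

lemma rlLIntegral_le_of_le {p q t₀ t : ℝ} (g : ℝ → ℝ≥0∞) (hpq : p ≤ q) (ht : t₀ ≤ t) :
    rlLIntegral q t₀ g t ≤ ENNReal.ofReal ((t - t₀) ^ (q - p)) * rlLIntegral p t₀ g t := by
  unfold rlLIntegral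
  rw [← setLIntegral_congr Ioo_ae_eq_Ioc, ← setLIntegral_congr Ioo_ae_eq_Ioc,
    ← lintegral_const_mul' _ _ ENNReal.ofReal_ne_top]
  refine setLIntegral_mono' measurableSet_Ioo fun s hs => ?_
  have hts : 0 < t - s := sub_pos.2 hs.2
  rw [← mul_assoc, ← ENNReal.ofReal_mul (by positivity), show q - 1 = q - p + (p - 1) by ring,
    rpow_add hts]
  gcongr
  linarith [hs.1]

lemma rpow_le_mul_rpow_add {x p q L : ℝ} (hx : 0 < x) (h : 1 ≤ L * x ^ q) :
    x ^ p ≤ L * x ^ (p + q) := by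
  rw [rpow_add hx, mul_left_comm]
  exact le_mul_of_one_le_right (rpow_nonneg hx.le _) h

lemma rpow_neg_inv_rpow {x y : ℝ} (hx : 0 ≤ x) (hy : y ≠ 0) : (x ^ (-y⁻¹)) ^ y = x⁻¹ := by
  rw [← rpow_mul hx, neg_mul, inv_mul_cancel₀ hy, rpow_neg_one]

lemma setLIntegral_Ioc_le_mul_rlLIntegral_two_mul {θ L t₀ t : ℝ} (g : ℝ → ℝ≥0∞) (hθ : 0 < θ)
    (hL : 0 < L) :
    ∫⁻ s in Ioc t₀ (t - L ^ (-θ⁻¹)), ENNReal.ofReal ((t - s) ^ (θ - 1)) * g s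
      ≤ ENNReal.ofReal L * rlLIntegral (2 * θ) t₀ g t := by
  have hδ : 0 < L ^ (-θ⁻¹) := rpow_pos_of_pos hL _
  calc ∫⁻ s in Ioc t₀ (t - L ^ (-θ⁻¹)), ENNReal.ofReal ((t - s) ^ (θ - 1)) * g s
      ≤ ∫⁻ s in Ioc t₀ (t - L ^ (-θ⁻¹)),
          ENNReal.ofReal L * (ENNReal.ofReal ((t - s) ^ (2 * θ - 1)) * g s) :=
        setLIntegral_mono' measurableSet_Ioc fun s hs => by
          have hδs : L ^ (-θ⁻¹) ≤ t - s := by linarith [hs.2]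
          rw [← mul_assoc, ← ENNReal.ofReal_mul hL.le, show 2 * θ - 1 = θ - 1 + θ by ring]
          gcongr
          refine rpow_le_mul_rpow_add (hδ.trans_le hδs) ?_
          calc 1 = L * (L ^ (-θ⁻¹)) ^ θ := by
                rw [rpow_neg_inv_rpow hL.le hθ.ne', mul_inv_cancel₀ hL.ne']
            _ ≤ L * (t - s) ^ θ := by gcongr
    _ = ENNReal.ofReal L * ∫⁻ s in Ioc t₀ (t - L ^ (-θ⁻¹)),
          ENNReal.ofReal ((t - s) ^ (2 * θ - 1)) * g s :=
        lintegral_const_mul' _ _ ENNReal.ofReal_ne_top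
    _ ≤ _ := mul_le_mul_right (lintegral_mono_set (Ioc_subset_Ioc_right (by linarith))) _

lemma setLIntegral_Ioc_le_add_mul_rlLIntegral_two_mul {θ M L t₀ a t : ℝ} {g : ℝ → ℝ≥0∞}
    (hθ : 0 < θ) (hg : Measurable g)
    (h : ∀ s, t₀ ≤ s → g s ≤ ENNReal.ofReal M + ENNReal.ofReal L * rlLIntegral θ t₀ g s)
    (hta : t₀ ≤ a) (hat : a ≤ t) :
    ∫⁻ s in Ioc a t, ENNReal.ofReal ((t - s) ^ (θ - 1)) * g s
      ≤ ENNReal.ofReal M * ENNReal.ofReal ((t - a) ^ θ / θ)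
        + ENNReal.ofReal L * (ENNReal.ofReal (betaBound θ) * rlLIntegral (2 * θ) t₀ g t) := by
  calc ∫⁻ s in Ioc a t, ENNReal.ofReal ((t - s) ^ (θ - 1)) * g s
      ≤ ∫⁻ s in Ioc a t, ENNReal.ofReal ((t - s) ^ (θ - 1)) *
          (ENNReal.ofReal M + ENNReal.ofReal L * rlLIntegral θ t₀ g s) :=
        setLIntegral_mono' measurableSet_Ioc fun s hs => by
          gcongr
          exact h s (hta.trans hs.1.le)
    _ = ENNReal.ofReal M * (∫⁻ s in Ioc a t, ENNReal.ofReal ((t - s) ^ (θ - 1)))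
          + ENNReal.ofReal L *
            ∫⁻ s in Ioc a t, ENNReal.ofReal ((t - s) ^ (θ - 1)) * rlLIntegral θ t₀ g s := by
        simp_rw [mul_add, mul_left_comm _ (ENNReal.ofReal L)]
        rw [lintegral_add_left (by fun_prop), lintegral_mul_const' _ _ ENNReal.ofReal_ne_top,
          lintegral_const_mul' _ _ ENNReal.ofReal_ne_top, mul_comm (∫⁻ _ in _, _)]
    _ ≤ _ := by
        rw [lintegral_Ioc_rpow_sub_left hθ hat]
        exact add_le_add_right (mul_le_mul_right
          ((lintegral_mono_set (Ioc_subset_Ioc_left hta)).trans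
            (rlLIntegral_rlLIntegral_le hθ hg)) _) _

lemma le_add_mul_rlLIntegral_two_mul {θ M L t₀ t : ℝ} {g : ℝ → ℝ≥0∞} (hθ : 0 < θ) (hM : 0 ≤ M)
    (hL : 0 < L) (hg : Measurable g)
    (h : ∀ s, t₀ ≤ s → g s ≤ ENNReal.ofReal M + ENNReal.ofReal L * rlLIntegral θ t₀ g s)
    (ht : t₀ ≤ t) :
    g t ≤ ENNReal.ofReal ((1 + θ⁻¹) * M)
      + ENNReal.ofReal ((1 + betaBound θ) * L ^ 2) * rlLIntegral (2 * θ) t₀ g t := by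
  set I := rlLIntegral (2 * θ) t₀ g t
  set δ := L ^ (-θ⁻¹)
  set a := max t₀ (t - δ)
  have hat : a ≤ t := max_le ht (by linarith [rpow_pos_of_pos hL (-θ⁻¹)])
  have hsplit : rlLIntegral θ t₀ g t = (∫⁻ s in Ioc t₀ a, ENNReal.ofReal ((t - s) ^ (θ - 1)) * g s)
      + ∫⁻ s in Ioc a t, ENNReal.ofReal ((t - s) ^ (θ - 1)) * g s := by
    rw [rlLIntegral, ← lintegral_union measurableSet_Ioc (Ioc_disjoint_Ioc_of_le le_rfl),
      Ioc_union_Ioc_eq_Ioc (le_max_left _ _) hat]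
  have far : ∫⁻ s in Ioc t₀ a, ENNReal.ofReal ((t - s) ^ (θ - 1)) * g s
      ≤ ENNReal.ofReal L * I :=
    (lintegral_mono_set fun s (hs : s ∈ Ioc t₀ a) =>
      (⟨hs.1, (le_max_iff.1 hs.2).resolve_left hs.1.not_ge⟩ : s ∈ Ioc t₀ (t - δ))).trans
      (setLIntegral_Ioc_le_mul_rlLIntegral_two_mul g hθ hL)
  have near : ∫⁻ s in Ioc a t, ENNReal.ofReal ((t - s) ^ (θ - 1)) * g s
      ≤ ENNReal.ofReal M * ENNReal.ofReal (L⁻¹ / θ)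
        + ENNReal.ofReal L * (ENNReal.ofReal (betaBound θ) * I) := by
    refine (setLIntegral_Ioc_le_add_mul_rlLIntegral_two_mul hθ hg h (le_max_left _ _) hat).trans ?_
    rw [← rpow_neg_inv_rpow hL.le hθ.ne']
    gcongr
    linarith [le_max_right t₀ (t - δ)]
  have hM' : ENNReal.ofReal ((1 + θ⁻¹) * M)
      = ENNReal.ofReal M + ENNReal.ofReal L * (ENNReal.ofReal M * ENNReal.ofReal (L⁻¹ / θ)) := by
    rw [← ENNReal.ofReal_mul hM, ← ENNReal.ofReal_mul hL.le,
      ← ENNReal.ofReal_add hM (by positivity)]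
    congr 1
    field_simp
  have hL' : ENNReal.ofReal ((1 + betaBound θ) * L ^ 2)
      = ENNReal.ofReal L * ENNReal.ofReal L
        + ENNReal.ofReal L * ENNReal.ofReal L * ENNReal.ofReal (betaBound θ) := by
    rw [← ENNReal.ofReal_mul hL.le, ← ENNReal.ofReal_mul (by positivity),
      ← ENNReal.ofReal_add (by positivity) (by have := betaBound_pos hθ; positivity)]
    congr 1
    ring
  calc g t ≤ ENNReal.ofReal M + ENNReal.ofReal L * rlLIntegral θ t₀ g t := h t ht
    _ ≤ ENNReal.ofReal M + ENNReal.ofReal L * (ENNReal.ofReal L * I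
          + (ENNReal.ofReal M * ENNReal.ofReal (L⁻¹ / θ)
            + ENNReal.ofReal L * (ENNReal.ofReal (betaBound θ) * I))) := by
        rw [hsplit]
        gcongr
    _ = _ := by
        rw [hM', hL']
        ring

lemma exists_le_add_mul_rlLIntegral_two_pow_mul {θ : ℝ} (hθ : 0 < θ) (n : ℕ) :
    ∃ C₁ ≥ 1, ∃ C₂ > 0, ∀ (M L t₀ : ℝ) (g : ℝ → ℝ≥0∞), 0 ≤ M → 0 < L → Measurable g →
      (∀ s, t₀ ≤ s → g s ≤ ENNReal.ofReal M + ENNReal.ofReal L * rlLIntegral θ t₀ g s) →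
      ∀ t, t₀ ≤ t → g t ≤ ENNReal.ofReal (C₁ * M)
        + ENNReal.ofReal (C₂ * L ^ 2 ^ n) * rlLIntegral (2 ^ n * θ) t₀ g t := by
  induction n with
  | zero => exact ⟨1, le_rfl, 1, one_pos, fun M L t₀ g _ _ _ h t ht => by simpa using h t ht⟩
  | succ n ih =>
    obtain ⟨C₁, hC₁, C₂, hC₂, H⟩ := ih
    have hθn : 0 < 2 ^ n * θ := by positivity
    refine ⟨(1 + (2 ^ n * θ)⁻¹) * C₁, one_le_mul_of_one_le_of_one_le
      (le_add_of_nonneg_right (by positivity)) hC₁, (1 + betaBound (2 ^ n * θ)) * C₂ ^ 2,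
      by have := betaBound_pos hθn; positivity, fun M L t₀ g hM hL hg h t ht => ?_⟩
    have key := le_add_mul_rlLIntegral_two_mul hθn (by positivity) (by positivity) hg
      (H M L t₀ g hM hL hg h) ht
    rw [mul_pow, ← pow_mul, ← pow_succ, show 2 * (2 ^ n * θ) = 2 ^ (n + 1) * θ by ring] at key
    simpa only [mul_assoc] using key

lemma integral_rpow_mul_eq_toReal_rlLIntegral {p t₀ t : ℝ} {g : ℝ → ℝ} (hg : ∀ s, 0 ≤ g s)
    (hgm : Measurable g) (ht : t₀ ≤ t) :
    ∫ s in t₀..t, (t - s) ^ (p - 1) * g s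
      = (rlLIntegral p t₀ (fun s => ENNReal.ofReal (g s)) t).toReal := by
  rw [integral_of_le ht, integral_eq_lintegral_of_nonneg_ae, rlLIntegral]
  · congr 1
    refine setLIntegral_congr_fun measurableSet_Ioc fun s hs => ?_
    exact ENNReal.ofReal_mul (rpow_nonneg (sub_nonneg.2 hs.2) _)
  · filter_upwards [ae_restrict_mem measurableSet_Ioc] with s hs
    exact mul_nonneg (rpow_nonneg (sub_nonneg.2 hs.2) _) (hg s)
  · exact (by fun_prop : Measurable fun s => (t - s) ^ (p - 1) * g s).aestronglyMeasurable

lemma ofReal_le_add_mul_rlLIntegral {p M L t₀ s : ℝ} {g : ℝ → ℝ} (hg : ∀ r, 0 ≤ g r)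
    (hgm : Measurable g) (hM : 0 ≤ M) (hL : 0 ≤ L) (hs : t₀ ≤ s)
    (h : g s ≤ M + L * ∫ r in t₀..s, (s - r) ^ (p - 1) * g r) :
    ENNReal.ofReal (g s) ≤
      ENNReal.ofReal M + ENNReal.ofReal L * rlLIntegral p t₀ (fun r => ENNReal.ofReal (g r)) s := by
  rw [integral_rpow_mul_eq_toReal_rlLIntegral hg hgm hs] at h
  calc ENNReal.ofReal (g s)
      ≤ ENNReal.ofReal (M + L * (rlLIntegral p t₀ (fun r => ENNReal.ofReal (g r)) s).toReal) :=
        ENNReal.ofReal_le_ofReal h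
    _ ≤ _ := by
        rw [ENNReal.ofReal_add hM (by positivity), ENNReal.ofReal_mul hL]
        gcongr
        exact ENNReal.ofReal_toReal_le

lemma le_add_mul_integral_of_ofReal_le {p q M L C₁ C₂ t₀ t : ℝ} {g : ℝ → ℝ}
    (hg : ∀ r, 0 ≤ g r) (hgm : Measurable g) (hpq : p ≤ q) (ht : t₀ ≤ t) (hC₁ : 1 ≤ C₁)
    (hC₂ : 0 ≤ C₂) (hM : 0 ≤ M) (hyp : g t ≤ M + L * ∫ s in t₀..t, (t - s) ^ (p - 1) * g s)
    (h : ENNReal.ofReal (g t) ≤ ENNReal.ofReal (C₁ * M)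
      + ENNReal.ofReal C₂ * rlLIntegral q t₀ (fun s => ENNReal.ofReal (g s)) t) :
    g t ≤ C₁ * M + C₂ * ∫ s in t₀..t, (t - s) ^ (q - 1) * g s := by
  set G : ℝ → ℝ≥0∞ := fun s => ENNReal.ofReal (g s)
  rw [integral_rpow_mul_eq_toReal_rlLIntegral hg hgm ht] at hyp ⊢
  by_cases hI : rlLIntegral q t₀ G t = ⊤
  · have hJ : rlLIntegral p t₀ G t = ⊤ := by
      by_contra hJ
      exact ne_top_of_le_ne_top (ENNReal.mul_ne_top ENNReal.ofReal_ne_top hJ)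
        (rlLIntegral_le_of_le G hpq ht) hI
    rw [hJ, ENNReal.toReal_top, mul_zero, add_zero] at hyp
    rw [hI, ENNReal.toReal_top, mul_zero, add_zero]
    exact hyp.trans (le_mul_of_one_le_left hM hC₁)
  · rw [ENNReal.ofReal_le_iff_le_toReal (by finiteness), ENNReal.toReal_add (by finiteness)
      (by finiteness), ENNReal.toReal_mul, ENNReal.toReal_ofReal (by positivity),
      ENNReal.toReal_ofReal hC₂] at h
    exact h

/-- Iterated singular Gronwall lemma: iterating the one-step estimate `n` times
yields constants `c₁(n,θ), c₂(n,θ) > 0` such that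
`g(t) ≤ c₁ M (1 + L^{2ⁿ-1}(t-t₀)^{2ⁿ-1}) + c₂ L^{2ⁿ} ∫_{t₀}^t (t-s)^{2ⁿθ-1} g(s) ds`. -/
theorem stmt2 (θ : ℝ) (hθ : 0 < θ) (n : ℕ) :
    ∃ c₁ > 0, ∃ c₂ > 0, ∀ (M L t₀ : ℝ), 0 < M → 0 < L →
      ∀ g : ℝ → ℝ, (∀ t, 0 ≤ g t) → Measurable g → LocallyIntegrable g →
      (∀ t, t₀ ≤ t → g t ≤ M + L * ∫ s in t₀..t, (t - s) ^ (θ - 1) * g s) →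
      ∀ t, t₀ ≤ t →
        g t ≤ c₁ * M * (1 + L ^ (2 ^ n - 1) * (t - t₀) ^ ((2:ℝ) ^ n - 1)) +
          c₂ * L ^ (2 ^ n) * ∫ s in t₀..t, (t - s) ^ ((2:ℝ) ^ n * θ - 1) * g s := by
  obtain ⟨C₁, hC₁, C₂, hC₂, H⟩ := exists_le_add_mul_rlLIntegral_two_pow_mul hθ n
  refine ⟨C₁, by linarith, C₂, hC₂, fun M L t₀ hM hL g hg hgm _ hyp t ht => ?_⟩
  have hgt := le_add_mul_integral_of_ofReal_le hg hgm
    (le_mul_of_one_le_left hθ.le (one_le_pow₀ one_le_two)) ht hC₁ (by positivity) hM.le (hyp t ht)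
    (H M L t₀ _ hM.le hL hgm.ennreal_ofReal
      (fun s hs => ofReal_le_add_mul_rlLIntegral hg hgm hM.le hL.le hs (hyp s hs)) t ht)
  have hpoly : 0 ≤ C₁ * M * (L ^ (2 ^ n - 1) * (t - t₀) ^ ((2:ℝ) ^ n - 1)) := by
    have := sub_nonneg.2 ht; positivity
  rw [mul_one_add]
  linarith
end

section
/- Under Hypothesis H1 on (A₂, Q₂) (orthonormal eigenbasis {e_k} with A₂e_k = -α_k e_k, Q₂e_k = λ_k e_k, inf_k α_k = λ > 0, κ₂ = Σ λ_k^{ρ₂}|e_k|₀² < ∞, ζ₂ = Σ α_k^{-β₂}|e_k|₀² < ∞, β₂(ρ₂-2)/ρ₂ < 1), for every self-adjoint J ∈ L(L^∞(D),H) ∩ L(H,L¹(D)) and s > 0: ‖e^{sA₂} J Q₂‖₂² ≤ (β₂/e)^{β₂(ρ₂-2)/ρ₂} ζ₂^{(ρ₂-2)/ρ₂} κ₂^{2/ρ₂} s^{-β₂(ρ₂-2)/ρ₂} e^{-λ(ρ₂+2)s/ρ₂} ‖J‖²_{L(L^∞(D),H)}. -/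
open RealInnerProductSpace

/-- The elementary bound `t^β e^{-ts} ≤ (β/e)^β s^{-β}` for `β, t, s > 0`. -/
lemma stmt7_aux_poly_exp {β t s : ℝ} (hβ : 0 < β) (ht : 0 < t) (hs : 0 < s) :
    t ^ β * Real.exp (-(t * s)) ≤ (β / Real.exp 1) ^ β * s ^ (-β) := by
  have hts : 0 < t * s := mul_pos ht hs
  have h1 : Real.log (t * s / β) ≤ t * s / β - 1 :=
    Real.log_le_sub_one_of_pos (by positivity)
  have h2 : β * Real.log t + β * Real.log s - β * Real.log β ≤ t * s - β := by
    have h3 := mul_le_mul_of_nonneg_left h1 hβ.le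
    rw [Real.log_div (ne_of_gt hts) (ne_of_gt hβ),
      Real.log_mul (ne_of_gt ht) (ne_of_gt hs)] at h3
    have h4 : β * (t * s / β) = t * s := by field_simp
    nlinarith [h3]
  have lhs_eq : t ^ β * Real.exp (-(t * s)) = Real.exp (β * Real.log t - t * s) := by
    rw [Real.rpow_def_of_pos ht, ← Real.exp_add]
    ring_nf
  have rhs_eq : (β / Real.exp 1) ^ β * s ^ (-β)
      = Real.exp (β * Real.log β - β - β * Real.log s) := by
    rw [Real.rpow_def_of_pos (by positivity), Real.rpow_def_of_pos hs,
      Real.log_div (ne_of_gt hβ) (Real.exp_ne_zero 1), Real.log_exp, ← Real.exp_add]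
    ring_nf
  rw [lhs_eq, rhs_eq, Real.exp_le_exp]
  linarith

/-- Hölder-type interpolation bound for series. -/
lemma stmt7_aux_holder {x y z : ℕ → ℝ} {θ X Y : ℝ} (hθ0 : 0 < θ) (hθ1 : θ < 1)
    (hx : ∀ k, 0 ≤ x k) (hy : ∀ k, 0 ≤ y k) (hz : ∀ k, 0 ≤ z k)
    (hzle : ∀ k, z k ≤ x k ^ θ * y k ^ (1 - θ))
    (hX : 0 < X) (hY : 0 < Y) (hxs : Summable x) (hys : Summable y)
    (hxX : ∑' k, x k ≤ X) (hyY : ∑' k, y k ≤ Y) :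
    ∑' k, z k ≤ X ^ θ * Y ^ (1 - θ) := by
  set A : ℝ := X ^ θ * Y ^ (1 - θ) with hA
  have hApos : 0 < A := mul_pos (Real.rpow_pos_of_pos hX θ) (Real.rpow_pos_of_pos hY (1 - θ))
  set g : ℕ → ℝ := fun k => A * (θ / X) * x k + A * ((1 - θ) / Y) * y k with hg
  have hgsum : Summable g := (hxs.mul_left _).add (hys.mul_left _)
  have hzg : ∀ k, z k ≤ g k := by
    intro k
    refine le_trans (hzle k) ?_
    have h1 : x k ^ θ * y k ^ (1 - θ)
        = A * ((x k / X) ^ θ * (y k / Y) ^ (1 - θ)) := by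
      rw [hA, show X ^ θ * Y ^ (1 - θ) * ((x k / X) ^ θ * (y k / Y) ^ (1 - θ))
          = (X ^ θ * (x k / X) ^ θ) * (Y ^ (1 - θ) * (y k / Y) ^ (1 - θ)) from by ring,
        ← Real.mul_rpow hX.le (div_nonneg (hx k) hX.le),
        ← Real.mul_rpow hY.le (div_nonneg (hy k) hY.le),
        show X * (x k / X) = x k from by field_simp,
        show Y * (y k / Y) = y k from by field_simp]
    rw [h1]
    have h2 : (x k / X) ^ θ * (y k / Y) ^ (1 - θ)
        ≤ θ * (x k / X) + (1 - θ) * (y k / Y) :=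
      Real.geom_mean_le_arith_mean2_weighted hθ0.le (by linarith)
        (div_nonneg (hx k) hX.le) (div_nonneg (hy k) hY.le) (by ring)
    have h3 := mul_le_mul_of_nonneg_left h2 hApos.le
    refine le_trans h3 (le_of_eq ?_)
    rw [hg]
    ring
  have hzsum : Summable z := Summable.of_nonneg_of_le hz hzg hgsum
  have h4 : ∑' k, z k ≤ ∑' k, g k := Summable.tsum_le_tsum hzg hzsum hgsum
  refine le_trans h4 ?_
  have h5 : ∑' k, g k = A * (θ / X) * (∑' k, x k) + A * ((1 - θ) / Y) * (∑' k, y k) := by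
    rw [hg, Summable.tsum_add (hxs.mul_left _) (hys.mul_left _), tsum_mul_left, tsum_mul_left]
  rw [h5]
  have h6 : A * (θ / X) * (∑' k, x k) ≤ A * (θ / X) * X := by
    apply mul_le_mul_of_nonneg_left hxX
    positivity
  have h7 : A * ((1 - θ) / Y) * (∑' k, y k) ≤ A * ((1 - θ) / Y) * Y := by
    apply mul_le_mul_of_nonneg_left hyY
    have : (0:ℝ) ≤ 1 - θ := by linarith
    positivity
  have h8 : A * (θ / X) * X + A * ((1 - θ) / Y) * Y = A := by
    field_simp
    ring
  linarith

set_option maxHeartbeats 2000000 in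
/-- Hypothesis H1 estimate: `‖e^{sA₂} J Q₂‖₂² = Σ_k λ_k² ‖e^{sA₂} J (j e_k)‖²` is
bounded by `(β₂/e)^{β₂(ρ₂-2)/ρ₂} ζ₂^{(ρ₂-2)/ρ₂} κ₂^{2/ρ₂} s^{-β₂(ρ₂-2)/ρ₂}
e^{-λ(ρ₂+2)s/ρ₂} ‖J‖²_{L(L^∞,H)}`, where `A₂ (j e_k) = -α_k e_k`,
`Q₂ (j e_k) = λ_k (j e_k)`, `inf α_k = λ > 0`,
`κ₂ = Σ λ_k^{ρ₂}‖e_k‖_∞²`, `ζ₂ = Σ α_k^{-β₂}‖e_k‖_∞²`. -/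
theorem stmt7 {E H : Type*} [NormedAddCommGroup E] [NormedSpace ℝ E]
    [NormedAddCommGroup H] [InnerProductSpace ℝ H] [CompleteSpace H]
    (e : ℕ → E) (j : E →L[ℝ] H)
    (hb : HilbertBasis ℕ ℝ H) (hbe : ∀ k, hb k = j (e k))
    (αf : ℕ → ℝ) (lam0 : ℝ) (hlam0 : 0 < lam0)
    (hglb : IsGLB (Set.range αf) lam0)
    (Q : H →L[ℝ] H) (lam : ℕ → ℝ) (hlam : ∀ k, 0 ≤ lam k)
    (hQ : ∀ k, Q (j (e k)) = lam k • j (e k))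
    (Sg : ℝ → H →L[ℝ] H)
    (hSg : ∀ s k, Sg s (j (e k)) = Real.exp (-(αf k * s)) • j (e k))
    (β₂ ρ₂ κ₂ ζ₂ : ℝ) (hβ₂ : 0 < β₂) (hρ₂ : 2 < ρ₂)
    (hβρ : β₂ * (ρ₂ - 2) / ρ₂ < 1)
    (hκ₂ : HasSum (fun k => lam k ^ ρ₂ * ‖e k‖ ^ 2) κ₂)
    (hζ₂ : HasSum (fun k => αf k ^ (-β₂) * ‖e k‖ ^ 2) ζ₂)
    (J : H →L[ℝ] H) (hJsa : ∀ h k, ⟪J h, k⟫ = ⟪h, J k⟫)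
    (NJ : ℝ) (hNJ : 0 ≤ NJ) (hJb : ∀ k, ‖J (j (e k))‖ ≤ NJ * ‖e k‖)
    (s : ℝ) (hs : 0 < s) :
    (∑' k, lam k ^ 2 * ‖Sg s (J (j (e k)))‖ ^ 2) ≤
      (β₂ / Real.exp 1) ^ (β₂ * (ρ₂ - 2) / ρ₂) * ζ₂ ^ ((ρ₂ - 2) / ρ₂) *
        κ₂ ^ (2 / ρ₂) * s ^ (-(β₂ * (ρ₂ - 2) / ρ₂)) *
          Real.exp (-(lam0 * (ρ₂ + 2) * s / ρ₂)) * NJ ^ 2 := by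
  classical
  have hρ0 : (0:ℝ) < ρ₂ := by linarith
  have hρne : ρ₂ ≠ 0 := ne_of_gt hρ0
  -- eigenvalue lower bounds
  have hαk : ∀ k, lam0 ≤ αf k := fun k => hglb.1 ⟨k, rfl⟩
  have hαpos : ∀ k, 0 < αf k := fun k => lt_of_lt_of_le hlam0 (hαk k)
  -- nonnegativity of κ₂ and ζ₂
  have hκnn : 0 ≤ κ₂ := hκ₂.nonneg fun k =>
    mul_nonneg (Real.rpow_nonneg (hlam k) _) (by positivity)
  have hζnn : 0 ≤ ζ₂ := hζ₂.nonneg fun k =>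
    mul_nonneg (Real.rpow_nonneg (hαpos k).le _) (by positivity)
  -- the RHS is nonnegative
  have hRHSnn : 0 ≤ (β₂ / Real.exp 1) ^ (β₂ * (ρ₂ - 2) / ρ₂) * ζ₂ ^ ((ρ₂ - 2) / ρ₂) *
      κ₂ ^ (2 / ρ₂) * s ^ (-(β₂ * (ρ₂ - 2) / ρ₂)) *
        Real.exp (-(lam0 * (ρ₂ + 2) * s / ρ₂)) * NJ ^ 2 := by
    have h1 : 0 ≤ (β₂ / Real.exp 1) ^ (β₂ * (ρ₂ - 2) / ρ₂) :=
      Real.rpow_nonneg (by positivity) _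
    have h2 : 0 ≤ ζ₂ ^ ((ρ₂ - 2) / ρ₂) := Real.rpow_nonneg hζnn _
    have h3 : 0 ≤ κ₂ ^ (2 / ρ₂) := Real.rpow_nonneg hκnn _
    have h4 : 0 ≤ s ^ (-(β₂ * (ρ₂ - 2) / ρ₂)) := Real.rpow_nonneg hs.le _
    have h5 := (Real.exp_pos (-(lam0 * (ρ₂ + 2) * s / ρ₂))).le
    have h6 : (0:ℝ) ≤ NJ ^ 2 := sq_nonneg NJ
    exact mul_nonneg (mul_nonneg (mul_nonneg (mul_nonneg (mul_nonneg h1 h2) h3) h4) h5) h6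
  -- a vanishing criterion for the summands
  have hterm0 : ∀ k, ‖J (j (e k))‖ ≤ 0 → ‖Sg s (J (j (e k)))‖ ^ 2 = 0 := by
    intro k hk
    have : J (j (e k)) = 0 := norm_le_zero_iff.mp hk
    rw [this, map_zero, norm_zero]
    norm_num
  -- Parseval identity
  have parseval : ∀ x : H, HasSum (fun i => (⟪x, hb i⟫ : ℝ) ^ 2) (‖x‖ ^ 2) := by
    intro x
    have h := hb.hasSum_inner_mul_inner x x
    rw [real_inner_self_eq_norm_sq] at h
    have heq : (fun i => (⟪x, hb i⟫ : ℝ) ^ 2) = fun i => (⟪x, hb i⟫ : ℝ) * ⟪hb i, x⟫ := by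
      funext i
      rw [real_inner_comm x (hb i), sq]
    rw [heq]
    exact h
  -- action of the semigroup on the basis
  have hSb : ∀ k, Sg s (hb k) = Real.exp (-(αf k * s)) • hb k := by
    intro k
    rw [hbe k]
    exact hSg s k
  -- diagonal action of the semigroup
  have hdiag : ∀ (x : H) (i : ℕ),
      (⟪Sg s x, hb i⟫ : ℝ) = Real.exp (-(αf i * s)) * ⟪x, hb i⟫ := by
    intro x i
    have h1 : HasSum (fun m => Sg s (hb.repr x m • hb m)) (Sg s x) :=
      (hb.hasSum_repr x).mapL (Sg s)
    have h2 : HasSum (fun m => (innerSL ℝ (hb i)) (Sg s (hb.repr x m • hb m)))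
        ((innerSL ℝ (hb i)) (Sg s x)) := h1.mapL (innerSL ℝ (hb i))
    have h3 : (fun m => (innerSL ℝ (hb i)) (Sg s (hb.repr x m • hb m))) =
        fun m => if m = i then Real.exp (-(αf i * s)) * hb.repr x i else 0 := by
      funext m
      have : Sg s (hb.repr x m • hb m) = hb.repr x m • (Real.exp (-(αf m * s)) • hb m) := by
        rw [map_smul, hSb m]
      rw [this]
      simp only [innerSL_apply_apply, real_inner_smul_right]
      rw [orthonormal_iff_ite.mp hb.orthonormal]
      by_cases hmi : m = i
      · subst hmi
        simp [mul_comm]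
      · simp [hmi, Ne.symm hmi]
    rw [h3] at h2
    have h4 := hasSum_ite_eq i (Real.exp (-(αf i * s)) * hb.repr x i)
    have h5 : (innerSL ℝ (hb i)) (Sg s x) = Real.exp (-(αf i * s)) * hb.repr x i :=
      h2.unique h4
    rw [real_inner_comm (hb i) (Sg s x), real_inner_comm (hb i) x]
    simpa [innerSL_apply_apply, hb.repr_apply_apply] using h5
  -- expansion of ‖Sg s x‖²
  have hasum : ∀ x : H, HasSum
      (fun i => Real.exp (-(αf i * s)) ^ 2 * (⟪x, hb i⟫ : ℝ) ^ 2) (‖Sg s x‖ ^ 2) := by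
    intro x
    have h := parseval (Sg s x)
    have heq : (fun i => Real.exp (-(αf i * s)) ^ 2 * (⟪x, hb i⟫ : ℝ) ^ 2)
        = fun i => (⟪Sg s x, hb i⟫ : ℝ) ^ 2 := by
      funext i
      rw [hdiag x i]
      ring
    rw [heq]
    exact h
  -- contraction property
  have contraction : ∀ x : H,
      ‖Sg s x‖ ^ 2 ≤ Real.exp (-(lam0 * s)) ^ 2 * ‖x‖ ^ 2 := by
    intro x
    have h1 := hasum x
    have h2 := (parseval x).mul_left (Real.exp (-(lam0 * s)) ^ 2)
    refine hasSum_le (fun i => ?_) h1 h2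
    have hle : Real.exp (-(αf i * s)) ≤ Real.exp (-(lam0 * s)) := by
      rw [Real.exp_le_exp]
      nlinarith [hαk i]
    have h0 : (0:ℝ) ≤ Real.exp (-(αf i * s)) := (Real.exp_pos _).le
    have hsq : Real.exp (-(αf i * s)) ^ 2 ≤ Real.exp (-(lam0 * s)) ^ 2 := by nlinarith
    exact mul_le_mul_of_nonneg_right hsq (sq_nonneg _)
  -- pointwise bound on a k := ‖Sg s (J (j (e k)))‖²
  have haD : ∀ k, ‖Sg s (J (j (e k)))‖ ^ 2 ≤
      (Real.exp (-(lam0 * s)) ^ 2 * NJ ^ 2) * ‖e k‖ ^ 2 := by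
    intro k
    have h1 := contraction (J (j (e k)))
    have h2 := hJb k
    have h3 : ‖J (j (e k))‖ ^ 2 ≤ (NJ * ‖e k‖) ^ 2 := by
      have := norm_nonneg (J (j (e k)))
      nlinarith
    nlinarith [sq_nonneg (Real.exp (-(lam0 * s)))]
  -- degenerate cases
  by_cases hNJ0 : NJ = 0
  · have hz : ∀ k, lam k ^ 2 * ‖Sg s (J (j (e k)))‖ ^ 2 = 0 := by
      intro k
      have : ‖J (j (e k))‖ ≤ 0 := by
        have := hJb k
        rw [hNJ0] at this
        simpa using this
      rw [hterm0 k this, mul_zero]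
    calc (∑' k, lam k ^ 2 * ‖Sg s (J (j (e k)))‖ ^ 2) = ∑' _ : ℕ, (0:ℝ) := tsum_congr hz
      _ = 0 := tsum_zero
      _ ≤ _ := hRHSnn
  by_cases hζ0 : ζ₂ = 0
  · have hz : ∀ k, lam k ^ 2 * ‖Sg s (J (j (e k)))‖ ^ 2 = 0 := by
      intro k
      have h1 : αf k ^ (-β₂) * ‖e k‖ ^ 2 ≤ 0 := by
        rw [← hζ0]
        exact le_hasSum hζ₂ k fun i _ =>
          mul_nonneg (Real.rpow_nonneg (hαpos i).le _) (by positivity)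
      have h2 : 0 < αf k ^ (-β₂) := Real.rpow_pos_of_pos (hαpos k) _
      have h3 : ‖e k‖ ^ 2 ≤ 0 := by nlinarith [sq_nonneg ‖e k‖]
      have h4 : ‖e k‖ = 0 := by nlinarith [norm_nonneg (e k), sq_nonneg ‖e k‖]
      have h5 : ‖J (j (e k))‖ ≤ 0 := by
        have := hJb k
        rw [h4, mul_zero] at this
        exact this
      rw [hterm0 k h5, mul_zero]
    calc (∑' k, lam k ^ 2 * ‖Sg s (J (j (e k)))‖ ^ 2) = ∑' _ : ℕ, (0:ℝ) := tsum_congr hz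
      _ = 0 := tsum_zero
      _ ≤ _ := hRHSnn
  by_cases hκ0 : κ₂ = 0
  · have hz : ∀ k, lam k ^ 2 * ‖Sg s (J (j (e k)))‖ ^ 2 = 0 := by
      intro k
      have h1 : lam k ^ ρ₂ * ‖e k‖ ^ 2 ≤ 0 := by
        rw [← hκ0]
        exact le_hasSum hκ₂ k fun i _ =>
          mul_nonneg (Real.rpow_nonneg (hlam i) _) (by positivity)
      have h2 : lam k ^ ρ₂ * ‖e k‖ ^ 2 = 0 :=
        le_antisymm h1 (mul_nonneg (Real.rpow_nonneg (hlam k) _) (by positivity))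
      rcases mul_eq_zero.mp h2 with h3 | h3
      · have h4 : lam k = 0 := ((Real.rpow_eq_zero_iff_of_nonneg (hlam k)).mp h3).1
        rw [h4]
        norm_num
      · have h4 : ‖e k‖ = 0 := by nlinarith [norm_nonneg (e k)]
        have h5 : ‖J (j (e k))‖ ≤ 0 := by
          have := hJb k
          rw [h4, mul_zero] at this
          exact this
        rw [hterm0 k h5, mul_zero]
    calc (∑' k, lam k ^ 2 * ‖Sg s (J (j (e k)))‖ ^ 2) = ∑' _ : ℕ, (0:ℝ) := tsum_congr hz
      _ = 0 := tsum_zero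
      _ ≤ _ := hRHSnn
  -- main case
  have hNJpos : 0 < NJ := lt_of_le_of_ne hNJ (Ne.symm hNJ0)
  have hκpos : 0 < κ₂ := lt_of_le_of_ne hκnn (Ne.symm hκ0)
  have hζpos : 0 < ζ₂ := lt_of_le_of_ne hζnn (Ne.symm hζ0)
  set θ : ℝ := 2 / ρ₂ with hθdef
  have hθ0 : 0 < θ := by positivity
  have hθ1 : θ < 1 := by
    rw [hθdef, div_lt_one hρ0]
    linarith
  set D : ℝ := Real.exp (-(lam0 * s)) ^ 2 * NJ ^ 2 with hD
  have hDpos : 0 < D := by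
    rw [hD]
    positivity
  have hbe1 : (0:ℝ) < β₂ / Real.exp 1 := div_pos hβ₂ (Real.exp_pos 1)
  set C0 : ℝ := (β₂ / Real.exp 1) ^ β₂ * s ^ (-β₂) * Real.exp (-(lam0 * s)) with hC0
  have hC0pos : 0 < C0 := by
    rw [hC0]
    have := Real.rpow_pos_of_pos hbe1 β₂
    have := Real.rpow_pos_of_pos hs (-β₂)
    have := Real.exp_pos (-(lam0 * s))
    positivity
  set Ysum : ℝ := C0 * NJ ^ 2 * ζ₂ with hYsum
  have hYpos : 0 < Ysum := by
    rw [hYsum]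
    positivity
  -- the key exponential bound
  have hexp2 : ∀ m, Real.exp (-(αf m * s)) ^ 2 ≤ C0 * αf m ^ (-β₂) := by
    intro m
    have h1 := stmt7_aux_poly_exp hβ₂ (hαpos m) hs
    have h2 : Real.exp (-(αf m * s)) ≤ Real.exp (-(lam0 * s)) := by
      rw [Real.exp_le_exp]
      nlinarith [hαk m]
    have hαβpos : 0 < αf m ^ β₂ := Real.rpow_pos_of_pos (hαpos m) _
    have h3 : αf m ^ (-β₂) = (αf m ^ β₂)⁻¹ := Real.rpow_neg (hαpos m).le β₂
    have e1 : Real.exp (-(αf m * s)) ≤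
        ((β₂ / Real.exp 1) ^ β₂ * s ^ (-β₂)) * (αf m ^ β₂)⁻¹ := by
      rw [mul_comm (αf m ^ β₂)] at h1
      rw [← div_eq_mul_inv]
      exact (le_div_iff₀ hαβpos).mpr h1
    calc Real.exp (-(αf m * s)) ^ 2
        = Real.exp (-(αf m * s)) * Real.exp (-(αf m * s)) := sq _
      _ ≤ (((β₂ / Real.exp 1) ^ β₂ * s ^ (-β₂)) * (αf m ^ β₂)⁻¹) * Real.exp (-(lam0 * s)) :=
          mul_le_mul e1 h2 (Real.exp_pos _).le
            (by positivity)
      _ = C0 * αf m ^ (-β₂) := by rw [hC0, h3]; ring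
  -- double sum manipulation
  have hbk : ∀ k, HasSum
      (fun m => Real.exp (-(αf m * s)) ^ 2 * (⟪hb k, J (hb m)⟫ : ℝ) ^ 2)
      (‖Sg s (J (j (e k)))‖ ^ 2) := by
    intro k
    have h := hasum (J (j (e k)))
    have heq : (fun m => Real.exp (-(αf m * s)) ^ 2 * (⟪hb k, J (hb m)⟫ : ℝ) ^ 2)
        = fun m => Real.exp (-(αf m * s)) ^ 2 * (⟪J (j (e k)), hb m⟫ : ℝ) ^ 2 := by
      funext m
      rw [hbe k, ← hJsa]
    rw [heq]
    exact h
  have hbm : ∀ m, HasSum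
      (fun k => Real.exp (-(αf m * s)) ^ 2 * (⟪hb k, J (hb m)⟫ : ℝ) ^ 2)
      (Real.exp (-(αf m * s)) ^ 2 * ‖J (hb m)‖ ^ 2) := by
    intro m
    have h := (parseval (J (hb m))).mul_left (Real.exp (-(αf m * s)) ^ 2)
    have heq : (fun k => Real.exp (-(αf m * s)) ^ 2 * (⟪hb k, J (hb m)⟫ : ℝ) ^ 2)
        = fun k => Real.exp (-(αf m * s)) ^ 2 * (⟪J (hb m), hb k⟫ : ℝ) ^ 2 := by
      funext k
      rw [real_inner_comm (hb k) (J (hb m))]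
    rw [heq]
    exact h
  have hbnn : ∀ k m, (0:ℝ) ≤ Real.exp (-(αf m * s)) ^ 2 * (⟪hb k, J (hb m)⟫ : ℝ) ^ 2 :=
    fun k m => mul_nonneg (sq_nonneg _) (sq_nonneg _)
  -- bound on the diagonal sum terms
  have hdm_le : ∀ m, Real.exp (-(αf m * s)) ^ 2 * ‖J (hb m)‖ ^ 2 ≤
      C0 * NJ ^ 2 * (αf m ^ (-β₂) * ‖e m‖ ^ 2) := by
    intro m
    have h1 := hexp2 m
    have h2 : ‖J (hb m)‖ ^ 2 ≤ NJ ^ 2 * ‖e m‖ ^ 2 := by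
      have h3 := hJb m
      rw [← hbe m] at h3
      nlinarith [norm_nonneg (J (hb m)), mul_nonneg hNJ (norm_nonneg (e m))]
    have h4 : 0 < αf m ^ (-β₂) := Real.rpow_pos_of_pos (hαpos m) _
    nlinarith [sq_nonneg (Real.exp (-(αf m * s))), sq_nonneg ‖J (hb m)‖,
      mul_nonneg (sq_nonneg (Real.exp (-(αf m * s)))) (sq_nonneg ‖J (hb m)‖),
      sq_nonneg ‖e m‖, sq_nonneg NJ]
  have hGsum : HasSum (fun m => C0 * NJ ^ 2 * (αf m ^ (-β₂) * ‖e m‖ ^ 2)) Ysum := by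
    rw [hYsum]
    exact hζ₂.mul_left _
  have hGnn : ∀ m, 0 ≤ C0 * NJ ^ 2 * (αf m ^ (-β₂) * ‖e m‖ ^ 2) := by
    intro m
    have h4 : 0 < αf m ^ (-β₂) := Real.rpow_pos_of_pos (hαpos m) _
    positivity
  -- swap the double sum in ℝ≥0∞
  have hswap : ∑' k, ENNReal.ofReal (‖Sg s (J (j (e k)))‖ ^ 2) =
      ∑' m, ENNReal.ofReal (Real.exp (-(αf m * s)) ^ 2 * ‖J (hb m)‖ ^ 2) := by
    have e1 : ∀ k, ENNReal.ofReal (‖Sg s (J (j (e k)))‖ ^ 2) =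
        ∑' m, ENNReal.ofReal (Real.exp (-(αf m * s)) ^ 2 * (⟪hb k, J (hb m)⟫ : ℝ) ^ 2) := by
      intro k
      rw [← (hbk k).tsum_eq]
      exact ENNReal.ofReal_tsum_of_nonneg (fun m => hbnn k m) (hbk k).summable
    have e2 : ∀ m, ENNReal.ofReal (Real.exp (-(αf m * s)) ^ 2 * ‖J (hb m)‖ ^ 2) =
        ∑' k, ENNReal.ofReal (Real.exp (-(αf m * s)) ^ 2 * (⟪hb k, J (hb m)⟫ : ℝ) ^ 2) := by
      intro m
      rw [← (hbm m).tsum_eq]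
      exact ENNReal.ofReal_tsum_of_nonneg (fun k => hbnn k m) (hbm m).summable
    calc ∑' k, ENNReal.ofReal (‖Sg s (J (j (e k)))‖ ^ 2)
        = ∑' k, ∑' m, ENNReal.ofReal
            (Real.exp (-(αf m * s)) ^ 2 * (⟪hb k, J (hb m)⟫ : ℝ) ^ 2) := tsum_congr e1
      _ = ∑' m, ∑' k, ENNReal.ofReal
            (Real.exp (-(αf m * s)) ^ 2 * (⟪hb k, J (hb m)⟫ : ℝ) ^ 2) := ENNReal.tsum_comm
      _ = ∑' m, ENNReal.ofReal (Real.exp (-(αf m * s)) ^ 2 * ‖J (hb m)‖ ^ 2) :=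
          (tsum_congr e2).symm
  have key : ∑' k, ENNReal.ofReal (‖Sg s (J (j (e k)))‖ ^ 2) ≤ ENNReal.ofReal Ysum := by
    rw [hswap]
    calc ∑' m, ENNReal.ofReal (Real.exp (-(αf m * s)) ^ 2 * ‖J (hb m)‖ ^ 2)
        ≤ ∑' m, ENNReal.ofReal (C0 * NJ ^ 2 * (αf m ^ (-β₂) * ‖e m‖ ^ 2)) :=
          ENNReal.tsum_le_tsum fun m => ENNReal.ofReal_le_ofReal (hdm_le m)
      _ = ENNReal.ofReal Ysum := by
          rw [← hGsum.tsum_eq,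
            ← ENNReal.ofReal_tsum_of_nonneg hGnn hGsum.summable, hGsum.tsum_eq]
  -- summability of a
  have hsummable_a : Summable (fun k => ‖Sg s (J (j (e k)))‖ ^ 2) := by
    have hne : ∑' k, ENNReal.ofReal (‖Sg s (J (j (e k)))‖ ^ 2) ≠ ⊤ :=
      (lt_of_le_of_lt key ENNReal.ofReal_lt_top).ne
    have h1 : Summable (fun k => (‖Sg s (J (j (e k)))‖ ^ 2).toNNReal) :=
      ENNReal.tsum_coe_ne_top_iff_summable.mp (by simpa [ENNReal.ofReal] using hne)
    have h2 := NNReal.summable_coe.mpr h1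
    refine h2.congr fun k => ?_
    rw [Real.coe_toNNReal _ (sq_nonneg _)]
  have hsum_a_le : ∑' k, ‖Sg s (J (j (e k)))‖ ^ 2 ≤ Ysum := by
    have h1 : ENNReal.ofReal (∑' k, ‖Sg s (J (j (e k)))‖ ^ 2) ≤ ENNReal.ofReal Ysum := by
      rw [ENNReal.ofReal_tsum_of_nonneg (fun k => sq_nonneg _) hsummable_a]
      exact key
    exact (ENNReal.ofReal_le_ofReal_iff hYpos.le).mp h1
  -- pointwise interpolation
  have hpt : ∀ k, lam k ^ 2 * ‖Sg s (J (j (e k)))‖ ^ 2 ≤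
      (D * (lam k ^ ρ₂ * ‖e k‖ ^ 2)) ^ θ * (‖Sg s (J (j (e k)))‖ ^ 2) ^ (1 - θ) := by
    intro k
    have hexpθ : ρ₂ * θ = 2 := by
      rw [hθdef]
      field_simp
    have hlamθ : ((lam k) ^ ρ₂) ^ θ = lam k ^ 2 := by
      rw [← Real.rpow_mul (hlam k), hexpθ]
      rw [show ((2:ℝ) = ((2:ℕ):ℝ)) by norm_num, Real.rpow_natCast]
    rcases eq_or_lt_of_le (sq_nonneg ‖Sg s (J (j (e k)))‖) with h0 | hak
    · rw [← h0, Real.zero_rpow (by linarith : (1:ℝ) - θ ≠ 0)]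
      simp
    · have hDc : (0:ℝ) ≤ D * ‖e k‖ ^ 2 := by positivity
      have key1 : ‖Sg s (J (j (e k)))‖ ^ 2 =
          (‖Sg s (J (j (e k)))‖ ^ 2) ^ θ * (‖Sg s (J (j (e k)))‖ ^ 2) ^ (1 - θ) := by
        rw [← Real.rpow_add hak]
        norm_num
      have key2 : (‖Sg s (J (j (e k)))‖ ^ 2) ^ θ ≤ (D * ‖e k‖ ^ 2) ^ θ :=
        Real.rpow_le_rpow (sq_nonneg _) (haD k) hθ0.le
      have key3 : (D * (lam k ^ ρ₂ * ‖e k‖ ^ 2)) ^ θ = lam k ^ 2 * (D * ‖e k‖ ^ 2) ^ θ := by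
        rw [show D * (lam k ^ ρ₂ * ‖e k‖ ^ 2) = (lam k ^ ρ₂) * (D * ‖e k‖ ^ 2) by ring,
          Real.mul_rpow (Real.rpow_nonneg (hlam k) _) hDc, hlamθ]
      calc lam k ^ 2 * ‖Sg s (J (j (e k)))‖ ^ 2
          = lam k ^ 2 * ((‖Sg s (J (j (e k)))‖ ^ 2) ^ θ *
              (‖Sg s (J (j (e k)))‖ ^ 2) ^ (1 - θ)) := by rw [← key1]
        _ ≤ lam k ^ 2 * ((D * ‖e k‖ ^ 2) ^ θ * (‖Sg s (J (j (e k)))‖ ^ 2) ^ (1 - θ)) := by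
            apply mul_le_mul_of_nonneg_left _ (sq_nonneg _)
            exact mul_le_mul_of_nonneg_right key2 (Real.rpow_nonneg (sq_nonneg _) _)
        _ = (D * (lam k ^ ρ₂ * ‖e k‖ ^ 2)) ^ θ * (‖Sg s (J (j (e k)))‖ ^ 2) ^ (1 - θ) := by
            rw [key3]
            ring
  -- apply the Hölder lemma
  have hXpos : 0 < D * κ₂ := mul_pos hDpos hκpos
  have hmain : ∑' k, lam k ^ 2 * ‖Sg s (J (j (e k)))‖ ^ 2 ≤
      (D * κ₂) ^ θ * Ysum ^ (1 - θ) := by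
    refine stmt7_aux_holder hθ0 hθ1
      (x := fun k => D * (lam k ^ ρ₂ * ‖e k‖ ^ 2))
      (y := fun k => ‖Sg s (J (j (e k)))‖ ^ 2)
      (fun k => mul_nonneg hDpos.le
        (mul_nonneg (Real.rpow_nonneg (hlam k) _) (by positivity)))
      (fun k => sq_nonneg _)
      (fun k => mul_nonneg (sq_nonneg _) (sq_nonneg _))
      hpt hXpos hYpos (hκ₂.mul_left D).summable hsummable_a
      (hκ₂.mul_left D).tsum_eq.le hsum_a_le
  refine le_trans hmain (le_of_eq ?_)
  -- final computation via logarithms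
  have hLpos : 0 < (D * κ₂) ^ θ * Ysum ^ (1 - θ) :=
    mul_pos (Real.rpow_pos_of_pos hXpos θ) (Real.rpow_pos_of_pos hYpos (1 - θ))
  have hA1 : 0 < (β₂ / Real.exp 1) ^ (β₂ * (ρ₂ - 2) / ρ₂) := Real.rpow_pos_of_pos hbe1 _
  have hA2 : 0 < ζ₂ ^ ((ρ₂ - 2) / ρ₂) := Real.rpow_pos_of_pos hζpos _
  have hA3 : 0 < κ₂ ^ (2 / ρ₂) := Real.rpow_pos_of_pos hκpos _
  have hA4 : 0 < s ^ (-(β₂ * (ρ₂ - 2) / ρ₂)) := Real.rpow_pos_of_pos hs _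
  have hA5 : 0 < Real.exp (-(lam0 * (ρ₂ + 2) * s / ρ₂)) := Real.exp_pos _
  have hA6 : 0 < NJ ^ 2 := by positivity
  have hRpos : 0 < (β₂ / Real.exp 1) ^ (β₂ * (ρ₂ - 2) / ρ₂) * ζ₂ ^ ((ρ₂ - 2) / ρ₂) *
      κ₂ ^ (2 / ρ₂) * s ^ (-(β₂ * (ρ₂ - 2) / ρ₂)) *
        Real.exp (-(lam0 * (ρ₂ + 2) * s / ρ₂)) * NJ ^ 2 := by positivity
  have l1 : Real.log (D * κ₂) = 2 * (-(lam0 * s)) + 2 * Real.log NJ + Real.log κ₂ := by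
    rw [hD, Real.log_mul (by positivity) hκpos.ne', Real.log_mul (by positivity) (by positivity),
      Real.log_pow, Real.log_pow, Real.log_exp]
    push_cast
    ring
  have l2 : Real.log Ysum = β₂ * Real.log (β₂ / Real.exp 1) + (-β₂) * Real.log s +
      (-(lam0 * s)) + 2 * Real.log NJ + Real.log ζ₂ := by
    have hf1 : ((β₂ / Real.exp 1) ^ β₂ : ℝ) ≠ 0 := (Real.rpow_pos_of_pos hbe1 β₂).ne'
    have hf2 : (s ^ (-β₂) : ℝ) ≠ 0 := (Real.rpow_pos_of_pos hs (-β₂)).ne'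
    rw [hYsum, hC0, Real.log_mul (by positivity) hζpos.ne',
      Real.log_mul (by positivity) (by positivity),
      Real.log_mul (by positivity) (Real.exp_pos _).ne',
      Real.log_mul hf1 hf2,
      Real.log_rpow hbe1, Real.log_rpow hs, Real.log_exp, Real.log_pow]
    push_cast
    ring
  have l3 : Real.log ((β₂ / Real.exp 1) ^ (β₂ * (ρ₂ - 2) / ρ₂) * ζ₂ ^ ((ρ₂ - 2) / ρ₂) *
      κ₂ ^ (2 / ρ₂) * s ^ (-(β₂ * (ρ₂ - 2) / ρ₂)) *
        Real.exp (-(lam0 * (ρ₂ + 2) * s / ρ₂)) * NJ ^ 2)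
      = (β₂ * (ρ₂ - 2) / ρ₂) * Real.log (β₂ / Real.exp 1) +
        ((ρ₂ - 2) / ρ₂) * Real.log ζ₂ + (2 / ρ₂) * Real.log κ₂ +
        (-(β₂ * (ρ₂ - 2) / ρ₂)) * Real.log s + (-(lam0 * (ρ₂ + 2) * s / ρ₂)) +
        2 * Real.log NJ := by
    rw [Real.log_mul (by positivity) hA6.ne',
      Real.log_mul (by positivity) hA5.ne',
      Real.log_mul (by positivity) hA4.ne',
      Real.log_mul (by positivity) hA3.ne',
      Real.log_mul hA1.ne' hA2.ne',
      Real.log_rpow hbe1, Real.log_rpow hζpos, Real.log_rpow hκpos,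
      Real.log_rpow hs, Real.log_exp, Real.log_pow]
    push_cast
    ring
  have hlog : Real.log ((D * κ₂) ^ θ * Ysum ^ (1 - θ)) =
      Real.log ((β₂ / Real.exp 1) ^ (β₂ * (ρ₂ - 2) / ρ₂) * ζ₂ ^ ((ρ₂ - 2) / ρ₂) *
        κ₂ ^ (2 / ρ₂) * s ^ (-(β₂ * (ρ₂ - 2) / ρ₂)) *
          Real.exp (-(lam0 * (ρ₂ + 2) * s / ρ₂)) * NJ ^ 2) := by
    rw [Real.log_mul (Real.rpow_pos_of_pos hXpos θ).ne'
        (Real.rpow_pos_of_pos hYpos (1 - θ)).ne',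
      Real.log_rpow hXpos, Real.log_rpow hYpos, l1, l2, l3, hθdef]
    field_simp
    ring
  calc (D * κ₂) ^ θ * Ysum ^ (1 - θ)
      = Real.exp (Real.log ((D * κ₂) ^ θ * Ysum ^ (1 - θ))) := (Real.exp_log hLpos).symm
    _ = Real.exp (Real.log ((β₂ / Real.exp 1) ^ (β₂ * (ρ₂ - 2) / ρ₂) * ζ₂ ^ ((ρ₂ - 2) / ρ₂) *
        κ₂ ^ (2 / ρ₂) * s ^ (-(β₂ * (ρ₂ - 2) / ρ₂)) *
          Real.exp (-(lam0 * (ρ₂ + 2) * s / ρ₂)) * NJ ^ 2)) := by rw [hlog]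
    _ = _ := Real.exp_log hRpos
end

section
/- (Gyöngy–Krylov criterion) Let X be a Polish space and {Z_n} a sequence of X-valued random elements on a probability space. Then Z_n converges in probability to some X-valued random element if and only if for every pair of subsequences {Z_{l_k}} and {Z_{m_k}} there exists a further subsequence such that the pairs (Z_{l_{k_j}}, Z_{m_{k_j}}) converge in law to a random element of X × X supported on the diagonal {(x,x) : x ∈ X}. -/
/-!
If `Z n → Z` in probability, any two subsequences converge jointly in probability, hence in law,
to `(Z, Z)`, whose law lives on the diagonal. Conversely, if `Z` were not Cauchy in probability
there would be subsequences with `ℙ (ε ≤ dist (Z (l k)) (Z (m k))) ≥ δ`; the set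
`{p | ε ≤ dist p.1 p.2}` is closed and null for any law on the diagonal, so by the portmanteau
theorem no further subsequence of the pairs converges in law to such a limit. Finally, a sequence
that is Cauchy in probability has a subsequence with `ℙ (2⁻¹ ^ k ≤ dist (Z (ψ (k+1))) (Z (ψ k)))`
summable, which converges almost surely by Borel–Cantelli and completeness, and the whole sequence
follows it in probability.
-/

open MeasureTheory Filter Topology

open scoped ENNReal

theorem exists_strictMono_pair_of_frequently {P : ℕ → ℕ → Prop}
    (h : ∃ᶠ p in atTop ×ˢ atTop, P p.1 p.2) :
    ∃ l m : ℕ → ℕ, StrictMono l ∧ StrictMono m ∧ ∀ k, P (l k) (m k) := by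
  obtain ⟨b, hb, hP⟩ := exists_seq_forall_of_frequently h
  obtain ⟨φ, hφ, hφ₁⟩ := strictMono_subseq_of_tendsto_atTop (tendsto_fst.comp hb)
  obtain ⟨ψ, hψ, hψ₂⟩ :=
    strictMono_subseq_of_tendsto_atTop ((tendsto_snd.comp hb).comp hφ.tendsto_atTop)
  exact ⟨_, _, hφ₁.comp hψ, hψ₂, fun k => hP _⟩

namespace MeasureTheory

variable {α E : Type*} {m : MeasurableSpace α} {μ : Measure α}

theorem TendstoInMeasure.prodMk {ι F : Type*} [PseudoEMetricSpace E] [PseudoEMetricSpace F]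
    {l : Filter ι} {f : ι → α → E} {g : α → E} {f' : ι → α → F} {g' : α → F}
    (hf : TendstoInMeasure μ f l g) (hf' : TendstoInMeasure μ f' l g') :
    TendstoInMeasure μ (fun i x => (f i x, f' i x)) l (fun x => (g x, g' x)) := by
  intro ε hε
  refine tendsto_of_tendsto_of_tendsto_of_le_of_le tendsto_const_nhds
    (by simpa using (hf ε hε).add (hf' ε hε)) (fun _ => zero_le) (fun i => ?_)
  simp only [Prod.edist_eq, le_max_iff, Set.ofPred_or]
  exact measure_union_le _ _

theorem measure_le_dist_le_add [PseudoMetricSpace E] (f g h : α → E) (ε : ℝ) :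
    μ {x | ε ≤ dist (f x) (h x)} ≤
      μ {x | ε / 2 ≤ dist (f x) (g x)} + μ {x | ε / 2 ≤ dist (g x) (h x)} := by
  refine (measure_mono fun x hx => ?_).trans (measure_union_le _ _)
  by_contra hx'
  simp only [Set.mem_union, Set.mem_ofPred_eq, not_or, not_le] at hx hx'
  linarith [dist_triangle (f x) (g x) (h x)]

theorem ae_cauchySeq_of_measure_le_geometric [PseudoMetricSpace E] {g : ℕ → α → E}
    (h : ∀ k, μ {x | (2⁻¹ : ℝ) ^ k ≤ dist (g (k + 1) x) (g k x)} ≤ (2⁻¹ : ℝ≥0∞) ^ k) :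
    ∀ᵐ x ∂μ, CauchySeq fun k => g k x := by
  have hsum : ∑' k, μ {x | (2⁻¹ : ℝ) ^ k ≤ dist (g (k + 1) x) (g k x)} ≠ ∞ :=
    ne_top_of_le_ne_top (by simp [ENNReal.tsum_geometric]) (ENNReal.tsum_le_tsum h)
  filter_upwards [ae_eventually_notMem hsum] with x hx
  refine cauchySeq_of_summable_dist (.of_norm_bounded_eventually
    (summable_geometric_of_lt_one (by norm_num) (by norm_num : (2⁻¹ : ℝ) < 1)) ?_)
  rw [Nat.cofinite_eq_atTop]
  filter_upwards [hx] with k hk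
  rw [Real.norm_of_nonneg dist_nonneg, dist_comm]
  exact (not_le.1 hk).le

def CauchyInMeasure [PseudoMetricSpace E] (μ : Measure α) (f : ℕ → α → E) : Prop :=
  ∀ ε, 0 < ε →
    Tendsto (fun p : ℕ × ℕ => μ {x | ε ≤ dist (f p.1 x) (f p.2 x)}) (atTop ×ˢ atTop) (𝓝 0)

namespace CauchyInMeasure

variable [PseudoMetricSpace E] {f : ℕ → α → E}

theorem tendstoInMeasure_of_subseq (hf : CauchyInMeasure μ f) {ψ : ℕ → ℕ}
    (hψ : Tendsto ψ atTop atTop) {g : α → E} (hg : TendstoInMeasure μ (fun k => f (ψ k)) atTop g) :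
    TendstoInMeasure μ f atTop g := by
  rw [tendstoInMeasure_iff_dist] at hg ⊢
  intro ε hε
  have hsum := ((hf _ (half_pos hε)).comp (tendsto_id.prodMk hψ)).add (hg _ (half_pos hε))
  rw [add_zero] at hsum
  exact tendsto_of_tendsto_of_tendsto_of_le_of_le tendsto_const_nhds hsum (fun _ => zero_le)
    fun n => measure_le_dist_le_add _ _ _ ε

theorem exists_subseq_measure_le_geometric (hf : CauchyInMeasure μ f) :
    ∃ ψ : ℕ → ℕ, StrictMono ψ ∧ ∀ k,
      μ {x | (2⁻¹ : ℝ) ^ k ≤ dist (f (ψ (k + 1)) x) (f (ψ k) x)} ≤ (2⁻¹ : ℝ≥0∞) ^ k := by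
  have hN : ∀ k, ∃ N, ∀ n ≥ N, ∀ m ≥ N,
      μ {x | (2⁻¹ : ℝ) ^ k ≤ dist (f n x) (f m x)} ≤ (2⁻¹ : ℝ≥0∞) ^ k := fun k => by
    have := (hf ((2⁻¹ : ℝ) ^ k) (by positivity)).eventually
      (ge_mem_nhds (ENNReal.pow_pos (ENNReal.inv_pos.2 (ENNReal.ofNat_ne_top (n := 2))) k))
    rwa [prod_atTop_atTop_eq, eventually_atTop_prod_self'] at this
  choose N hN using hN
  obtain ⟨ψ, hψ, hψN⟩ := extraction_forall_of_eventually' fun k => ⟨N k, fun n hn => hn⟩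
  exact ⟨ψ, hψ, fun k => hN k _ ((hψN k).trans (hψ.monotone k.le_succ)) _ (hψN k)⟩

theorem exists_tendstoInMeasure [CompleteSpace E] [MeasurableSpace E] [BorelSpace E]
    [SecondCountableTopology E] [IsFiniteMeasure μ] (hf : CauchyInMeasure μ f)
    (hmeas : ∀ n, AEMeasurable (f n) μ) :
    ∃ g : α → E, Measurable g ∧ TendstoInMeasure μ f atTop g := by
  obtain ⟨ψ, hψ, hψμ⟩ := hf.exists_subseq_measure_le_geometric
  obtain ⟨g, hg, hlim⟩ := measurable_limit_of_tendsto_metrizable_ae (fun k => hmeas (ψ k))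
    ((ae_cauchySeq_of_measure_le_geometric hψμ).mono fun _ => cauchySeq_tendsto_of_complete)
  exact ⟨g, hg, hf.tendstoInMeasure_of_subseq hψ.tendsto_atTop
    (tendstoInMeasure_of_tendsto_ae (fun k => (hmeas _).aestronglyMeasurable) hlim)⟩

end CauchyInMeasure

theorem ProbabilityMeasure.tendsto_map_iff_forall_integral_tendsto {ι Ω E : Type*}
    [MeasurableSpace Ω] {μ : Measure Ω} [IsProbabilityMeasure μ] [TopologicalSpace E]
    [MeasurableSpace E] [OpensMeasurableSpace E] {L : Filter ι} {W : ι → Ω → E}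
    (hW : ∀ i, AEMeasurable (W i) μ) {ν : ProbabilityMeasure E} :
    Tendsto (β := ProbabilityMeasure E)
        (fun i => ⟨μ.map (W i), Measure.isProbabilityMeasure_map (hW i)⟩) L (𝓝 ν) ↔
      ∀ f : BoundedContinuousFunction E ℝ,
        Tendsto (fun i => ∫ ω, f (W i ω) ∂μ) L (𝓝 (∫ x, f x ∂(ν : Measure E))) := by
  refine ProbabilityMeasure.tendsto_iff_forall_integral_tendsto.trans (forall_congr' fun f => ?_)
  simp only [ProbabilityMeasure.coe_mk,
    fun i => integral_map (hW i) f.continuous.aestronglyMeasurable]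

theorem ProbabilityMeasure.tendsto_measure_le_dist_of_tendsto_of_diagonal {ι X : Type*}
    [MetricSpace X] [MeasurableSpace X] [OpensMeasurableSpace (X × X)] {L : Filter ι}
    {μs : ι → ProbabilityMeasure (X × X)} {ν : ProbabilityMeasure (X × X)}
    (h : Tendsto μs L (𝓝 ν)) (hν : (ν : Measure (X × X)) (Set.diagonal X) = 1)
    {ε : ℝ} (hε : 0 < ε) :
    Tendsto (fun i => (μs i : Measure (X × X)) {p | ε ≤ dist p.1 p.2}) L (𝓝 0) := by
  have hC : IsClosed {p : X × X | ε ≤ dist p.1 p.2} := isClosed_le continuous_const continuous_dist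
  have hνC : (ν : Measure (X × X)) {p | ε ≤ dist p.1 p.2} = 0 := by
    refine measure_mono_null (t := (Set.diagonal X)ᶜ) (fun p hp hdiag => ?_)
      ((prob_compl_eq_zero_iff isClosed_diagonal.measurableSet).2 hν)
    simp only [Set.mem_ofPred_eq, Set.mem_diagonal_iff.1 hdiag, dist_self] at hp
    linarith
  exact tendsto_of_le_liminf_of_limsup_le zero_le
    (hνC ▸ limsup_measure_closed_le_of_tendsto h hC)

end MeasureTheory

theorem cauchyInMeasure_of_forall_subseq_tendsto_diagonal {X : Type*} [MetricSpace X]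
    [MeasurableSpace X] [OpensMeasurableSpace (X × X)]
    {Ω : Type*} [MeasurableSpace Ω] (ℙ : Measure Ω) [IsProbabilityMeasure ℙ]
    (Z : ℕ → Ω → X) (hZ : ∀ n, Measurable (Z n))
    (h : ∀ l m : ℕ → ℕ, StrictMono l → StrictMono m →
      ∃ φ : ℕ → ℕ, StrictMono φ ∧
        ∃ ν : Measure (X × X), IsProbabilityMeasure ν ∧
          ν {p : X × X | p.1 = p.2} = 1 ∧
          ∀ f : BoundedContinuousFunction (X × X) ℝ,
            Tendsto (fun k => ∫ ω, f (Z (l (φ k)) ω, Z (m (φ k)) ω) ∂ℙ) atTop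
              (𝓝 (∫ p, f p ∂ν))) :
    CauchyInMeasure ℙ Z := by
  intro ε hε
  refine tendsto_order.2 ⟨fun _ ha => (ENNReal.not_lt_zero ha).elim, fun δ hδ => ?_⟩
  by_contra hfreq
  simp only [not_eventually, not_lt] at hfreq
  obtain ⟨l, m, hl, hm, hlm⟩ := exists_strictMono_pair_of_frequently
    (P := fun n m => δ ≤ ℙ {ω | ε ≤ dist (Z n ω) (Z m ω)}) hfreq
  obtain ⟨φ, -, ν, hν, hdiag, hconv⟩ := h l m hl hm
  have hW : ∀ k, Measurable fun ω => (Z (l (φ k)) ω, Z (m (φ k)) ω) := fun k => by fun_prop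
  have hlim := ProbabilityMeasure.tendsto_measure_le_dist_of_tendsto_of_diagonal
    ((ProbabilityMeasure.tendsto_map_iff_forall_integral_tendsto (ν := ⟨ν, hν⟩)
      fun k => (hW k).aemeasurable).2 hconv) hdiag hε
  refine hδ.not_ge (ge_of_tendsto' hlim fun k => ?_)
  rw [ProbabilityMeasure.coe_mk,
    Measure.map_apply (hW k) (isClosed_le continuous_const continuous_dist).measurableSet]
  exact hlm (φ k)

/-- Gyöngy–Krylov criterion: a sequence of random elements of a Polish space
converges in probability iff every pair of subsequences admits a further
subsequence along which the pairs converge in law to a limit supported on the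
diagonal. -/
theorem stmt10 {X : Type*} [MetricSpace X] [CompleteSpace X]
    [TopologicalSpace.SeparableSpace X] [MeasurableSpace X] [BorelSpace X]
    {Ω : Type*} [MeasurableSpace Ω] (ℙ : Measure Ω) [IsProbabilityMeasure ℙ]
    (Z : ℕ → Ω → X) (hZ : ∀ n, Measurable (Z n)) :
    (∃ Zlim : Ω → X, Measurable Zlim ∧ TendstoInMeasure ℙ Z atTop Zlim) ↔
    (∀ l m : ℕ → ℕ, StrictMono l → StrictMono m →
      ∃ φ : ℕ → ℕ, StrictMono φ ∧
        ∃ ν : Measure (X × X), IsProbabilityMeasure ν ∧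
          ν {p : X × X | p.1 = p.2} = 1 ∧
          ∀ f : BoundedContinuousFunction (X × X) ℝ,
            Tendsto (fun k => ∫ ω, f (Z (l (φ k)) ω, Z (m (φ k)) ω) ∂ℙ) atTop
              (𝓝 (∫ p, f p ∂ν))) := by
  have : SecondCountableTopology X := UniformSpace.secondCountable_of_separable X
  constructor
  · rintro ⟨Zlim, hZlim, hT⟩ l m hl hm
    have hpair := (hT.comp hl.tendsto_atTop).prodMk (hT.comp hm.tendsto_atTop)
    have hW : ∀ k, AEMeasurable (fun ω => (Z (l k) ω, Z (m k) ω)) ℙ := fun k => by fun_prop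
    refine ⟨id, strictMono_id, ℙ.map fun ω => (Zlim ω, Zlim ω),
      Measure.isProbabilityMeasure_map (by fun_prop), ?_, ?_⟩
    · rw [Measure.map_apply (by fun_prop) (isClosed_eq continuous_fst continuous_snd).measurableSet]
      simp
    · exact (ProbabilityMeasure.tendsto_map_iff_forall_integral_tendsto hW).1
        (hpair.tendstoInDistribution hW).tendsto
  · intro h
    exact (cauchyInMeasure_of_forall_subseq_tendsto_diagonal ℙ Z hZ h).exists_tendstoInMeasure
      fun n => (hZ n).aemeasurable
end
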